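/- For a real number α > −1 define the lower semicontinuous submeasure φ_α(A) := sup_{n≥1} (Σ_{i ∈ A ∩ [1,n]} i^α)/(Σ_{i=1}^n i^α), and define φ_∞(A) := Σ_{α∈ℕ} 2^{−α} φ_{2^α}(A) for A ⊆ ℕ. Then φ_∞ is a lower semicontinuous submeasure with φ_∞(ℕ) < ∞, and for every A ⊆ ℕ one has ‖A‖_{φ_∞} = Σ_{α∈ℕ} 2^{−α} ‖A‖_{φ_{2^α}}. -/

import Mathlib

open Filter Topology
open scoped ENNReal

/-- The `φ`-mass at infinity `‖A‖_φ = lim_n φ(A \ {0,…,n-1})`; since the sequence is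
nonincreasing (for monotone `φ`), the limit equals the infimum. -/
noncomputable def exhNorm (φ : Set ℕ → ℝ≥0∞) (A : Set ℕ) : ℝ≥0∞ :=
  ⨅ n : ℕ, φ (A \ Set.Iio n)

/-- The lscsm `φ_α(A) = sup_{n ≥ 1} (∑_{i ∈ A ∩ [1,n]} i^α) / (∑_{i=1}^n i^α)`
for a real `α > -1`. -/
noncomputable def phiAlpha (α : ℝ) (A : Set ℕ) : ℝ≥0∞ :=
  ⨆ n : ℕ, ENNReal.ofReal
    ((∑ i ∈ Finset.Icc 1 (n + 1), Set.indicator A (fun i : ℕ => (i : ℝ) ^ α) i) /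
      ∑ i ∈ Finset.Icc 1 (n + 1), (i : ℝ) ^ α)

/-- `φ_∞(A) = ∑_{α ∈ ℕ} 2^{-α} φ_{2^α}(A)`. -/
noncomputable def phiInfty (A : Set ℕ) : ℝ≥0∞ :=
  ∑' a : ℕ, (1 / 2 : ℝ≥0∞) ^ a * phiAlpha ((2 : ℝ) ^ a) A

lemma rpow_nn (α : ℝ) (i : ℕ) : 0 ≤ (i : ℝ) ^ α := Real.rpow_nonneg (Nat.cast_nonneg i) α

lemma ind_nn (α : ℝ) (A : Set ℕ) (i : ℕ) :
    0 ≤ Set.indicator A (fun i : ℕ => (i : ℝ) ^ α) i :=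
  Set.indicator_nonneg (fun j _ => rpow_nn α j) i

lemma denom_pos (α : ℝ) (n : ℕ) : 0 < ∑ i ∈ Finset.Icc 1 (n + 1), (i : ℝ) ^ α := by
  have h1 : (1 : ℕ) ∈ Finset.Icc 1 (n + 1) := by simp
  have := Finset.single_le_sum (f := fun i : ℕ => (i : ℝ) ^ α)
    (fun i _ => rpow_nn α i) h1
  simp only [Nat.cast_one, Real.one_rpow] at this
  linarith

lemma phiAlpha_mono (α : ℝ) {A B : Set ℕ} (h : A ⊆ B) : phiAlpha α A ≤ phiAlpha α B := by
  refine iSup_mono fun n => ENNReal.ofReal_le_ofReal ?_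
  gcongr with i hi

lemma phiAlpha_le_one (α : ℝ) (A : Set ℕ) : phiAlpha α A ≤ 1 := by
  refine iSup_le fun n => ?_
  rw [← ENNReal.ofReal_one]
  refine ENNReal.ofReal_le_ofReal ?_
  rw [div_le_one (denom_pos α n)]
  exact Finset.sum_le_sum fun i _ => Set.indicator_le_self' (fun j _ => rpow_nn α j) i

lemma le_phiAlpha (α : ℝ) (A : Set ℕ) (n : ℕ) :
    ENNReal.ofReal
      ((∑ i ∈ Finset.Icc 1 (n + 1), Set.indicator A (fun i : ℕ => (i : ℝ) ^ α) i) /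
        ∑ i ∈ Finset.Icc 1 (n + 1), (i : ℝ) ^ α) ≤ phiAlpha α A :=
  le_iSup (fun n : ℕ => ENNReal.ofReal
      ((∑ i ∈ Finset.Icc 1 (n + 1), Set.indicator A (fun i : ℕ => (i : ℝ) ^ α) i) /
        ∑ i ∈ Finset.Icc 1 (n + 1), (i : ℝ) ^ α)) n

lemma phiAlpha_empty (α : ℝ) : phiAlpha α ∅ = 0 := by
  simp [phiAlpha]

lemma phiAlpha_union_le (α : ℝ) (A B : Set ℕ) :
    phiAlpha α (A ∪ B) ≤ phiAlpha α A + phiAlpha α B := by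
  refine iSup_le fun n => ?_
  set f : ℕ → ℝ := fun i => (i : ℝ) ^ α with hf
  have hind : ∀ i, Set.indicator (A ∪ B) f i ≤ Set.indicator A f i + Set.indicator B f i := by
    intro i
    by_cases hA : i ∈ A
    · rw [Set.indicator_of_mem (Set.mem_union_left _ hA), Set.indicator_of_mem hA]
      have := Set.indicator_nonneg (s := B) (fun j _ => rpow_nn α j) i
      linarith
    · by_cases hB : i ∈ B
      · rw [Set.indicator_of_mem (Set.mem_union_right _ hB), Set.indicator_of_mem hB,
          Set.indicator_of_notMem hA, zero_add]
      · rw [Set.indicator_of_notMem (by simp [hA, hB]), Set.indicator_of_notMem hA,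
          Set.indicator_of_notMem hB, add_zero]
  calc ENNReal.ofReal ((∑ i ∈ Finset.Icc 1 (n + 1), Set.indicator (A ∪ B) f i) /
          ∑ i ∈ Finset.Icc 1 (n + 1), f i)
      ≤ ENNReal.ofReal ((∑ i ∈ Finset.Icc 1 (n + 1), Set.indicator A f i) /
          ∑ i ∈ Finset.Icc 1 (n + 1), f i +
        (∑ i ∈ Finset.Icc 1 (n + 1), Set.indicator B f i) /
          ∑ i ∈ Finset.Icc 1 (n + 1), f i) := by
        refine ENNReal.ofReal_le_ofReal ?_
        rw [← add_div]
        gcongr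
        rw [← Finset.sum_add_distrib]
        exact Finset.sum_le_sum fun i _ => hind i
    _ ≤ _ := by
        refine (ENNReal.ofReal_add_le).trans ?_
        exact add_le_add (le_phiAlpha α A n) (le_phiAlpha α B n)

lemma phiAlpha_lsc (α : ℝ) (A : Set ℕ) :
    phiAlpha α A = ⨆ m : ℕ, phiAlpha α (A ∩ Set.Iio m) := by
  refine le_antisymm (iSup_le fun n => ?_) (iSup_le fun m => phiAlpha_mono α Set.inter_subset_left)
  have hnum : ∀ i ∈ Finset.Icc 1 (n + 1),
      Set.indicator A (fun i : ℕ => (i : ℝ) ^ α) i =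
      Set.indicator (A ∩ Set.Iio (n + 2)) (fun i : ℕ => (i : ℝ) ^ α) i := by
    intro i hi
    have hlt : i < n + 2 := by
      have := (Finset.mem_Icc.mp hi).2; omega
    by_cases hA : i ∈ A <;>
      simp [Set.indicator_apply, Set.mem_inter_iff, Set.mem_Iio, hlt, hA]
  calc ENNReal.ofReal ((∑ i ∈ Finset.Icc 1 (n + 1),
          Set.indicator A (fun i : ℕ => (i : ℝ) ^ α) i) /
          ∑ i ∈ Finset.Icc 1 (n + 1), (i : ℝ) ^ α)
      = ENNReal.ofReal ((∑ i ∈ Finset.Icc 1 (n + 1),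
          Set.indicator (A ∩ Set.Iio (n + 2)) (fun i : ℕ => (i : ℝ) ^ α) i) /
          ∑ i ∈ Finset.Icc 1 (n + 1), (i : ℝ) ^ α) := by
        rw [Finset.sum_congr rfl hnum]
    _ ≤ phiAlpha α (A ∩ Set.Iio (n + 2)) := le_phiAlpha α _ n
    _ ≤ ⨆ m : ℕ, phiAlpha α (A ∩ Set.Iio m) :=
        le_iSup (fun m : ℕ => phiAlpha α (A ∩ Set.Iio m)) (n + 2)

lemma tsum_half_pow : ∑' a : ℕ, (1 / 2 : ℝ≥0∞) ^ a = 2 := by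
  rw [ENNReal.tsum_geometric, one_div, ENNReal.one_sub_inv_two, inv_inv]

lemma half_pow_ne_top (a : ℕ) : (1 / 2 : ℝ≥0∞) ^ a ≠ ∞ := by
  refine ENNReal.pow_ne_top ?_
  simp [one_div]

lemma half_pow_ne_zero (a : ℕ) : (1 / 2 : ℝ≥0∞) ^ a ≠ 0 := by
  refine pow_ne_zero _ ?_
  simp [one_div]

lemma phiInfty_le_two (A : Set ℕ) : phiInfty A ≤ 2 := by
  calc phiInfty A ≤ ∑' a : ℕ, (1 / 2 : ℝ≥0∞) ^ a * 1 :=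
        ENNReal.tsum_le_tsum fun a => mul_le_mul_right (phiAlpha_le_one _ A) _
    _ = 2 := by simp [tsum_half_pow]

lemma ennreal_tsum_iSup_of_monotone {f : ℕ → ℕ → ℝ≥0∞} (hf : ∀ a, Monotone (f a)) :
    ∑' a, ⨆ n, f a n = ⨆ n, ∑' a, f a n := by
  rw [ENNReal.tsum_eq_iSup_sum]
  calc (⨆ s : Finset ℕ, ∑ a ∈ s, ⨆ n, f a n)
      = ⨆ s : Finset ℕ, ⨆ n, ∑ a ∈ s, f a n :=
        iSup_congr fun s => ENNReal.finsetSum_iSup_of_monotone hf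
    _ = ⨆ n, ⨆ s : Finset ℕ, ∑ a ∈ s, f a n := iSup_comm
    _ = ⨆ n, ∑' a, f a n := iSup_congr fun n => ENNReal.tsum_eq_iSup_sum.symm

lemma iInf_finsetSum_of_antitone {s : Finset ℕ} {f : ℕ → ℕ → ℝ≥0∞}
    (hf : ∀ a, Antitone (f a)) :
    ⨅ n, ∑ a ∈ s, f a n = ∑ a ∈ s, ⨅ n, f a n := by
  have h1 : Tendsto (fun n => ∑ a ∈ s, f a n) atTop (𝓝 (∑ a ∈ s, ⨅ n, f a n)) :=
    tendsto_finset_sum s fun a _ => tendsto_atTop_iInf (hf a)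
  have h2 : Antitone fun n => ∑ a ∈ s, f a n :=
    fun n m h => Finset.sum_le_sum fun a _ => hf a h
  exact tendsto_nhds_unique (tendsto_atTop_iInf h2) h1

lemma iInf_half_pow : ⨅ N : ℕ, (1 / 2 : ℝ≥0∞) ^ N = 0 := by
  have hlt : (1 / 2 : ℝ≥0∞) < 1 := by
    rw [one_div]
    exact ENNReal.inv_lt_one.mpr ENNReal.one_lt_two
  have h2 : Antitone fun N : ℕ => (1 / 2 : ℝ≥0∞) ^ N :=
    fun n m h => pow_le_pow_right_of_le_one' hlt.le h
  exact tendsto_nhds_unique (tendsto_atTop_iInf h2)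
    (ENNReal.tendsto_pow_atTop_nhds_zero_of_lt_one hlt)

lemma tsum_tail_le (g : ℕ → ℝ≥0∞) (hg : ∀ a, g a ≤ 1) (N : ℕ) :
    ∑' a : ℕ, (1 / 2 : ℝ≥0∞) ^ a * g a ≤
      (∑ a ∈ Finset.range N, (1 / 2 : ℝ≥0∞) ^ a * g a) + 2 * (1 / 2) ^ N := by
  set f : ℕ → ℝ≥0∞ := fun a => (1 / 2 : ℝ≥0∞) ^ a * g a with hfdef
  have hsplit : ∀ a, f a =
      (if a ∈ Finset.range N then f a else 0) + (if a ∈ Finset.range N then 0 else f a) := by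
    intro a; by_cases h : a ∈ Finset.range N <;> simp [h]
  have h1 : ∑' a : ℕ, (if a ∈ Finset.range N then f a else 0) = ∑ a ∈ Finset.range N, f a := by
    rw [tsum_eq_sum (s := Finset.range N) fun b hb => if_neg hb]
    exact Finset.sum_congr rfl fun a ha => if_pos ha
  have h2 : ∑' a : ℕ, (if a ∈ Finset.range N then 0 else f a) ≤ 2 * (1 / 2 : ℝ≥0∞) ^ N := by
    set F : ℕ → ℝ≥0∞ := fun a => if a ∈ Finset.range N then 0 else (1 / 2 : ℝ≥0∞) ^ a with hF
    have hle : ∑' a : ℕ, (if a ∈ Finset.range N then 0 else f a) ≤ ∑' a, F a := by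
      refine ENNReal.tsum_le_tsum fun a => ?_
      by_cases h : a ∈ Finset.range N
      · simp [h, hF]
      · simp only [hF, if_neg h, hfdef]
        calc (1 / 2 : ℝ≥0∞) ^ a * g a ≤ (1 / 2 : ℝ≥0∞) ^ a * 1 := mul_le_mul_right (hg a) _
          _ = (1 / 2 : ℝ≥0∞) ^ a := mul_one _
    refine hle.trans ?_
    have hinj : Function.Injective (fun k : ℕ => k + N) := add_left_injective N
    have hsupp : Function.support F ⊆ Set.range (fun k : ℕ => k + N) := by
      intro b hb
      rcases lt_or_ge b N with h | h
      · exfalso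
        apply hb
        simp [hF, Finset.mem_range, h]
      · exact ⟨b - N, Nat.sub_add_cancel h⟩
    rw [← Function.Injective.tsum_eq hinj hsupp]
    have hFval : ∀ k : ℕ, F (k + N) = (1 / 2 : ℝ≥0∞) ^ k * (1 / 2) ^ N := by
      intro k
      rw [hF]
      simp only [Finset.mem_range, if_neg (by omega : ¬ k + N < N)]
      rw [pow_add]
    calc ∑' k : ℕ, F (k + N) = ∑' k : ℕ, (1 / 2 : ℝ≥0∞) ^ k * (1 / 2) ^ N := tsum_congr hFval
      _ = (∑' k : ℕ, (1 / 2 : ℝ≥0∞) ^ k) * (1 / 2) ^ N := ENNReal.tsum_mul_right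
      _ ≤ 2 * (1 / 2) ^ N := le_of_eq (by rw [tsum_half_pow])
  calc ∑' a : ℕ, f a
      = (∑' a : ℕ, (if a ∈ Finset.range N then f a else 0)) +
        ∑' a : ℕ, (if a ∈ Finset.range N then 0 else f a) := by
        rw [← ENNReal.tsum_add]; exact tsum_congr hsplit
    _ ≤ (∑ a ∈ Finset.range N, f a) + 2 * (1 / 2) ^ N := by
        rw [h1]; exact add_le_add_right h2 _

lemma phiInfty_empty : phiInfty ∅ = 0 := by
  simp [phiInfty, phiAlpha_empty]

lemma phiInfty_mono {A B : Set ℕ} (h : A ⊆ B) : phiInfty A ≤ phiInfty B :=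
  ENNReal.tsum_le_tsum fun a => mul_le_mul_right (phiAlpha_mono _ h) _

lemma phiInfty_union_le (A B : Set ℕ) : phiInfty (A ∪ B) ≤ phiInfty A + phiInfty B := by
  calc phiInfty (A ∪ B)
      ≤ ∑' a : ℕ, ((1 / 2 : ℝ≥0∞) ^ a * phiAlpha ((2 : ℝ) ^ a) A +
          (1 / 2 : ℝ≥0∞) ^ a * phiAlpha ((2 : ℝ) ^ a) B) :=
        ENNReal.tsum_le_tsum fun a => by
          rw [← mul_add]; exact mul_le_mul_right (phiAlpha_union_le _ A B) _
    _ = phiInfty A + phiInfty B := ENNReal.tsum_add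

lemma phiInfty_lsc (A : Set ℕ) : phiInfty A = ⨆ n : ℕ, phiInfty (A ∩ Set.Iio n) := by
  unfold phiInfty
  have h : ∀ a : ℕ, (1 / 2 : ℝ≥0∞) ^ a * phiAlpha ((2 : ℝ) ^ a) A =
      ⨆ n : ℕ, (1 / 2 : ℝ≥0∞) ^ a * phiAlpha ((2 : ℝ) ^ a) (A ∩ Set.Iio n) := fun a => by
    rw [phiAlpha_lsc _ A, ENNReal.mul_iSup]
  rw [tsum_congr h]
  exact ennreal_tsum_iSup_of_monotone fun a n m hnm =>
    mul_le_mul_right (phiAlpha_mono _ (Set.inter_subset_inter_right _ (Set.Iio_subset_Iio hnm))) _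

lemma exhNorm_phiInfty (A : Set ℕ) :
    exhNorm phiInfty A =
      ∑' a : ℕ, (1 / 2 : ℝ≥0∞) ^ a * exhNorm (phiAlpha ((2 : ℝ) ^ a)) A := by
  set g : ℕ → ℕ → ℝ≥0∞ := fun a n => phiAlpha ((2 : ℝ) ^ a) (A \ Set.Iio n) with hg
  have hganti : ∀ a, Antitone (g a) := fun a n m h =>
    phiAlpha_mono _ (Set.diff_subset_diff_right (Set.Iio_subset_Iio h))
  have hfanti : ∀ a, Antitone fun n => (1 / 2 : ℝ≥0∞) ^ a * g a n := fun a n m h =>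
    mul_le_mul_right (hganti a h) _
  have hRHS : (∑' a : ℕ, (1 / 2 : ℝ≥0∞) ^ a * exhNorm (phiAlpha ((2 : ℝ) ^ a)) A) =
      ∑' a : ℕ, ⨅ n : ℕ, (1 / 2 : ℝ≥0∞) ^ a * g a n :=
    tsum_congr fun a => by
      rw [exhNorm, ENNReal.mul_iInf_of_ne (half_pow_ne_zero a) (half_pow_ne_top a)]
  have hLHS : exhNorm phiInfty A = ⨅ n : ℕ, ∑' a : ℕ, (1 / 2 : ℝ≥0∞) ^ a * g a n := rfl
  rw [hRHS, hLHS]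
  apply le_antisymm
  · have key : ∀ N : ℕ, (⨅ n : ℕ, ∑' a : ℕ, (1 / 2 : ℝ≥0∞) ^ a * g a n) ≤
        (∑' a : ℕ, ⨅ n : ℕ, (1 / 2 : ℝ≥0∞) ^ a * g a n) + 2 * (1 / 2) ^ N := by
      intro N
      calc (⨅ n : ℕ, ∑' a : ℕ, (1 / 2 : ℝ≥0∞) ^ a * g a n)
          ≤ ⨅ n : ℕ, ((∑ a ∈ Finset.range N, (1 / 2 : ℝ≥0∞) ^ a * g a n) + 2 * (1 / 2) ^ N) :=
            le_iInf fun n => (iInf_le _ n).trans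
              (tsum_tail_le (fun a => g a n) (fun a => phiAlpha_le_one _ _) N)
        _ = (⨅ n : ℕ, ∑ a ∈ Finset.range N, (1 / 2 : ℝ≥0∞) ^ a * g a n) + 2 * (1 / 2) ^ N :=
            ENNReal.iInf_add.symm
        _ = (∑ a ∈ Finset.range N, ⨅ n : ℕ, (1 / 2 : ℝ≥0∞) ^ a * g a n) + 2 * (1 / 2) ^ N := by
            rw [iInf_finsetSum_of_antitone hfanti]
        _ ≤ _ := add_le_add_left (ENNReal.sum_le_tsum _) _
    calc (⨅ n : ℕ, ∑' a : ℕ, (1 / 2 : ℝ≥0∞) ^ a * g a n)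
        ≤ ⨅ N : ℕ, ((∑' a : ℕ, ⨅ n : ℕ, (1 / 2 : ℝ≥0∞) ^ a * g a n) + 2 * (1 / 2) ^ N) :=
          le_iInf key
      _ = (∑' a : ℕ, ⨅ n : ℕ, (1 / 2 : ℝ≥0∞) ^ a * g a n) + ⨅ N : ℕ, 2 * (1 / 2 : ℝ≥0∞) ^ N :=
          ENNReal.add_iInf.symm
      _ = _ := by
          rw [← ENNReal.mul_iInf_of_ne two_ne_zero ENNReal.ofNat_ne_top, iInf_half_pow,
            mul_zero, add_zero]
  · exact le_iInf fun n => ENNReal.tsum_le_tsum fun a => iInf_le _ n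

/-- `φ_∞` is a lower semicontinuous submeasure with `φ_∞(ℕ) < ∞`, and
`‖A‖_{φ_∞} = ∑_{α ∈ ℕ} 2^{-α} ‖A‖_{φ_{2^α}}` for every `A ⊆ ℕ`. -/
theorem phiInfty_lscsm_and_exhNorm :
    (phiInfty ∅ = 0) ∧
    (∀ A B : Set ℕ, A ⊆ B → phiInfty A ≤ phiInfty B) ∧
    (∀ A B : Set ℕ, phiInfty (A ∪ B) ≤ phiInfty A + phiInfty B) ∧
    (∀ F : Set ℕ, F.Finite → phiInfty F ≠ ⊤) ∧
    (∀ A : Set ℕ, phiInfty A = ⨆ n : ℕ, phiInfty (A ∩ Set.Iio n)) ∧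
    (phiInfty Set.univ ≠ ⊤) ∧
    (∀ A : Set ℕ,
      exhNorm phiInfty A =
        ∑' a : ℕ, (1 / 2 : ℝ≥0∞) ^ a * exhNorm (phiAlpha ((2 : ℝ) ^ a)) A) := by
  refine ⟨phiInfty_empty, fun A B h => phiInfty_mono h, phiInfty_union_le,
    fun F _ => ((phiInfty_le_two F).trans_lt ENNReal.ofNat_ne_top.lt_top).ne,
    phiInfty_lsc,
    ((phiInfty_le_two _).trans_lt ENNReal.ofNat_ne_top.lt_top).ne,
    exhNorm_phiInfty⟩
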